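/- Let (x̂, ŷ) : (−∞,0] → E₁ × E₂ be continuous with (x̂, ŷ) ∈ C_β^−(E₁ × E₂), and suppose that for all u ≤ t ≤ 0 it satisfies the variation-of-constants identities x̂(t) = exp(tS)x̂(0) + ∫₀^t exp((t−s)S) ĝ₁(s, x̂(s), ŷ(s)) ds and ŷ(t) = exp(((t−u)/ε)F) ŷ(u) + (1/ε)∫_u^t exp(((t−s)/ε)F) ĝ₂(s, x̂(s), ŷ(s)) ds. Then for every t ≤ 0 the improper integral (1/ε)∫_{−∞}^t exp(((t−s)/ε)F) ĝ₂(s, x̂(s), ŷ(s)) ds converges and equals ŷ(t); that is, (x̂, ŷ) satisfies the Lyapunov–Perron integral equation. -/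

import Mathlib

open MeasureTheory Real Filter

noncomputable section

/-- Weighted sup-norm `sup_{t ≤ 0} e^{-β t} ‖φ t‖` on `(-∞,0]`. -/
def negNorm {E : Type*} [NormedAddCommGroup E] (β : ℝ) (φ : ℝ → E) : ℝ :=
  ⨆ t : Set.Iic (0 : ℝ), Real.exp (-β * t.1) * ‖φ t.1‖

/-- Membership in the Banach space `C_β^-(E)` of continuous functions on `(-∞,0]`
with finite weighted sup-norm. -/
def MemCneg {E : Type*} [NormedAddCommGroup E] (β : ℝ) (φ : ℝ → E) : Prop :=
  ContinuousOn φ (Set.Iic 0) ∧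
    BddAbove (Set.range fun t : Set.Iic (0 : ℝ) => Real.exp (-β * t.1) * ‖φ t.1‖)

/-- Weighted sup-norm `sup_{t ≥ 0} e^{-β t} ‖φ t‖` on `[0,∞)`. -/
def posNorm {E : Type*} [NormedAddCommGroup E] (β : ℝ) (φ : ℝ → E) : ℝ :=
  ⨆ t : Set.Ici (0 : ℝ), Real.exp (-β * t.1) * ‖φ t.1‖

/-- Membership in the Banach space `C_β^+(E)` of continuous functions on `[0,∞)`
with finite weighted sup-norm. -/
def MemCpos {E : Type*} [NormedAddCommGroup E] (β : ℝ) (φ : ℝ → E) : Prop :=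
  ContinuousOn φ (Set.Ici 0) ∧
    BddAbove (Set.range fun t : Set.Ici (0 : ℝ) => Real.exp (-β * t.1) * ‖φ t.1‖)

variable {E₁ E₂ : Type*}
  [NormedAddCommGroup E₁] [NormedSpace ℝ E₁]
  [NormedAddCommGroup E₂] [NormedSpace ℝ E₂]

/-- Slow component of the Lyapunov–Perron operator `I^ε_{x₀}`. -/
def LPslow (S : E₁ →L[ℝ] E₁) (g1 : ℝ → E₁ → E₂ → E₁) (x0 : E₁)
    (x : ℝ → E₁) (y : ℝ → E₂) (t : ℝ) : E₁ :=
  NormedSpace.exp (t • S) x0 +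
    ∫ s in (0:ℝ)..t, NormedSpace.exp ((t - s) • S) (g1 s (x s) (y s))

/-- Fast component of the Lyapunov–Perron operator `I^ε_{x₀}`. -/
def LPfast (F : E₂ →L[ℝ] E₂) (g2 : ℝ → E₁ → E₂ → E₂) (ε : ℝ)
    (x : ℝ → E₁) (y : ℝ → E₂) (t : ℝ) : E₂ :=
  (1/ε) • ∫ s in Set.Iic t, NormedSpace.exp (((t - s)/ε) • F) (g2 s (x s) (y s))

/-!
On `s ≤ t ≤ 0` the fast flow `exp(((t - s)/ε) F)` contracts like `e^{γf (t - s)/ε}`, while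
`ŷ` and, by the Lipschitz bound, the nonlinearity `ĝ₂(s, x̂(s), ŷ(s))` grow at most like
`e^{-γ s/ε}` as `s → -∞`. Since `γ + γf < -K < 0`, both the transported initial value
`exp(((t - u)/ε) F) ŷ(u)` and the integrand decay like `e^{-(γ + γf) s/ε}`; hence the integral
over `(-∞, t]` converges and letting `u → -∞` in the variation-of-constants identity gives `ŷ(t)`.
-/

open Topology

lemma le_mul_exp_of_exp_neg_mul_le {a C β s : ℝ} (h : Real.exp (-β * s) * a ≤ C) :
    a ≤ C * Real.exp (β * s) := by
  calc a = Real.exp (β * s) * (Real.exp (-β * s) * a) := by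
        rw [← mul_assoc, ← Real.exp_add, neg_mul, add_neg_cancel, Real.exp_zero, one_mul]
    _ ≤ Real.exp (β * s) * C := by gcongr
    _ = C * Real.exp (β * s) := mul_comm _ _

lemma MemCneg.exists_norm_le {E : Type*} [NormedAddCommGroup E] {β : ℝ} {φ : ℝ → E}
    (h : MemCneg β φ) : ∃ C, ∀ s ≤ (0:ℝ), ‖φ s‖ ≤ C * Real.exp (β * s) := by
  obtain ⟨C, hC⟩ := h.2
  exact ⟨C, fun s hs => le_mul_exp_of_exp_neg_mul_le (hC ⟨⟨s, hs⟩, rfl⟩)⟩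

section Superposition

variable {V W E : Type*} [NormedAddCommGroup V] [NormedAddCommGroup W] [NormedAddCommGroup E]

lemma continuous_uncurry_of_norm_sub_le {G : V → W → E} {K : ℝ} (hK : 0 ≤ K)
    (hG : ∀ x₁ y₁ x₂ y₂, ‖G x₁ y₁ - G x₂ y₂‖ ≤ K * (‖x₁ - x₂‖ + ‖y₁ - y₂‖)) :
    Continuous fun p : V × W => G p.1 p.2 := by
  refine (LipschitzWith.of_dist_le' (K := 2 * K) fun p q => ?_).continuous
  rw [dist_eq_norm, dist_eq_norm]
  calc ‖G p.1 p.2 - G q.1 q.2‖ ≤ K * (‖p.1 - q.1‖ + ‖p.2 - q.2‖) := hG _ _ _ _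
    _ ≤ K * (‖p - q‖ + ‖p - q‖) := by gcongr; exacts [norm_fst_le (p - q), norm_snd_le (p - q)]
    _ = 2 * K * ‖p - q‖ := by ring

lemma norm_le_of_norm_sub_le {G : V → W → E} {K M Cx Cy w : ℝ} (hK : 0 ≤ K)
    (hG : ∀ x₁ y₁ x₂ y₂, ‖G x₁ y₁ - G x₂ y₂‖ ≤ K * (‖x₁ - x₂‖ + ‖y₁ - y₂‖))
    (h0 : ‖G 0 0‖ ≤ M * w) {x : V} {y : W} (hx : ‖x‖ ≤ Cx * w) (hy : ‖y‖ ≤ Cy * w) :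
    ‖G x y‖ ≤ (M + K * (Cx + Cy)) * w := by
  have hxy : ‖G x y - G 0 0‖ ≤ K * (‖x‖ + ‖y‖) := by simpa using hG x y 0 0
  calc ‖G x y‖ ≤ ‖G 0 0‖ + ‖G x y - G 0 0‖ := norm_le_norm_add_norm_sub' _ _
    _ ≤ M * w + K * (Cx * w + Cy * w) := by gcongr; exact hxy.trans (by gcongr)
    _ = (M + K * (Cx + Cy)) * w := by ring

variable [SecondCountableTopology V] [MeasurableSpace V] [BorelSpace V]
  [SecondCountableTopology W] [MeasurableSpace W] [BorelSpace W]
  [SecondCountableTopology E] [MeasurableSpace E] [BorelSpace E]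

lemma aestronglyMeasurable_superposition {α : Type*} [MeasurableSpace α] {μ : Measure α}
    {g : α → V → W → E} (hg_cont : ∀ a, Continuous fun p : V × W => g a p.1 p.2)
    (hg_meas : ∀ x y, Measurable fun a => g a x y) {x : α → V} {y : α → W}
    (hx : AEMeasurable x μ) (hy : AEMeasurable y μ) :
    AEStronglyMeasurable (fun a => g a (x a) (y a)) μ := by
  have hG : Measurable (Function.uncurry fun (p : V × W) (a : α) => g a p.1 p.2) :=
    measurable_uncurry_of_continuous_of_measurable hg_cont fun p => hg_meas p.1 p.2
  exact (hG.comp_aemeasurable ((hx.prodMk hy).prodMk aemeasurable_id)).aestronglyMeasurable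

end Superposition

section FastFlow

variable {E : Type*} [NormedAddCommGroup E] [NormedSpace ℝ E]

lemma aestronglyMeasurable_exp_smul_apply [CompleteSpace E] {μ : Measure ℝ} (F : E →L[ℝ] E)
    (t ε : ℝ) {v : ℝ → E} (hv : AEStronglyMeasurable v μ) :
    AEStronglyMeasurable (fun s => NormedSpace.exp (((t - s)/ε) • F) (v s)) μ := by
  have hexp : Continuous fun s : ℝ => NormedSpace.exp (((t - s)/ε) • F) :=
    (differentiable_exp_smul_const ℝ F).continuous.comp (by fun_prop)
  exact (ContinuousLinearMap.id ℝ _).aestronglyMeasurable_comp₂ hexp.aestronglyMeasurable hv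

lemma norm_exp_smul_apply_le {F : E →L[ℝ] E} {γf ε : ℝ} (hε : 0 < ε)
    (hF : ∀ t ≥ (0:ℝ), ∀ y : E, ‖NormedSpace.exp (t • F) y‖ ≤ Real.exp (γf * t) * ‖y‖)
    {s t C β : ℝ} (hst : s ≤ t) {v : E} (hv : ‖v‖ ≤ C * Real.exp (β * s)) :
    ‖NormedSpace.exp (((t - s)/ε) • F) v‖ ≤
      C * Real.exp (γf/ε * t) * Real.exp ((β - γf/ε) * s) := by
  have hexp : γf * ((t - s)/ε) + β * s = γf/ε * t + (β - γf/ε) * s := by ring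
  calc ‖NormedSpace.exp (((t - s)/ε) • F) v‖ ≤ Real.exp (γf * ((t - s)/ε)) * ‖v‖ :=
        hF _ (div_nonneg (sub_nonneg.2 hst) hε.le) v
    _ ≤ Real.exp (γf * ((t - s)/ε)) * (C * Real.exp (β * s)) := by gcongr
    _ = C * Real.exp (γf/ε * t) * Real.exp ((β - γf/ε) * s) := by
        rw [mul_left_comm, ← Real.exp_add, hexp, Real.exp_add, mul_assoc]

end FastFlow

section ExponentialDecay

variable {E : Type*} [NormedAddCommGroup E]

lemma integrableOn_Iic_of_norm_le_exp {f : ℝ → E} {t C c : ℝ} (hc : 0 < c)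
    (hf : AEStronglyMeasurable f (volume.restrict (Set.Iic t)))
    (hle : ∀ s ≤ t, ‖f s‖ ≤ C * Real.exp (c * s)) : IntegrableOn f (Set.Iic t) := by
  refine Integrable.mono' ((integrableOn_exp_mul_Iic hc t).const_mul C) hf ?_
  filter_upwards [ae_restrict_mem measurableSet_Iic] with s hs using hle s hs

lemma tendsto_atBot_zero_of_norm_le_exp {a : ℝ → E} {C c : ℝ} (hc : 0 < c)
    (hle : ∀ᶠ u in atBot, ‖a u‖ ≤ C * Real.exp (c * u)) : Tendsto a atBot (𝓝 0) := by
  have hexp : Tendsto (fun u => C * Real.exp (c * u)) atBot (𝓝 0) := by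
    simpa using (Real.tendsto_exp_atBot.comp (tendsto_id.const_mul_atBot hc)).const_mul C
  exact squeeze_zero_norm' hle hexp

lemma eq_smul_integral_Iic_of_eventually_eq [NormedSpace ℝ E] {f a : ℝ → E} {y : E} {t c : ℝ}
    (hf : IntegrableOn f (Set.Iic t)) (ha : Tendsto a atBot (𝓝 0))
    (hy : ∀ᶠ u in atBot, y = a u + c • ∫ s in u..t, f s) :
    y = c • ∫ s in Set.Iic t, f s := by
  have hlim : Tendsto (fun u => a u + c • ∫ s in u..t, f s) atBot
      (𝓝 (0 + c • ∫ s in Set.Iic t, f s)) :=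
    ha.add ((intervalIntegral_tendsto_integral_Iic t hf tendsto_id).const_smul c)
  rw [zero_add] at hlim
  exact tendsto_nhds_unique (tendsto_const_nhds.congr' (hy.mono fun _ h => h)) hlim

end ExponentialDecay

theorem variationOfConstants_implies_lyapunovPerron_general
    {E₁ E₂ : Type*}
    [NormedAddCommGroup E₁] [NormedSpace ℝ E₁] [FiniteDimensional ℝ E₁] [MeasurableSpace E₁] [BorelSpace E₁]
    [NormedAddCommGroup E₂] [NormedSpace ℝ E₂] [FiniteDimensional ℝ E₂] [MeasurableSpace E₂] [BorelSpace E₂]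
    (F : E₂ →L[ℝ] E₂)
    (γf γ K ε : ℝ)
    (hK : 0 < K)
    (hgap : K < -(γ + γf)) (hε : 0 < ε)
    (hF : ∀ t ≥ (0:ℝ), ∀ y : E₂, ‖NormedSpace.exp (t • F) y‖ ≤ Real.exp (γf * t) * ‖y‖)
    (g1 : ℝ → E₁ → E₂ → E₁) (g2 : ℝ → E₁ → E₂ → E₂)
    (hg2m : ∀ x y, Measurable fun t => g2 t x y)
    (hg2l : ∀ t x₁ y₁ x₂ y₂, ‖g2 t x₁ y₁ - g2 t x₂ y₂‖ ≤ K * (‖x₁ - x₂‖ + ‖y₁ - y₂‖))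
    (hg0 : ∃ M, ∀ t ≤ (0:ℝ),
      Real.exp ((γ/ε) * t) * (‖g1 t 0 0‖ + ‖g2 t 0 0‖) ≤ M)
    (xh : ℝ → E₁) (yh : ℝ → E₂)
    (hmem : MemCneg (-γ/ε) xh ∧ MemCneg (-γ/ε) yh)
    (hvocy : ∀ u t : ℝ, u ≤ t → t ≤ 0 →
      yh t = NormedSpace.exp (((t - u)/ε) • F) (yh u) +
        (1/ε) • ∫ s in u..t, NormedSpace.exp (((t - s)/ε) • F) (g2 s (xh s) (yh s))) :
    ∀ t ≤ (0:ℝ),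
      IntegrableOn (fun s => NormedSpace.exp (((t - s)/ε) • F) (g2 s (xh s) (yh s)))
        (Set.Iic t) ∧
      yh t = LPfast F g2 ε xh yh t := by
  intro t ht
  obtain ⟨Cx, hx⟩ := hmem.1.exists_norm_le
  obtain ⟨Cy, hy⟩ := hmem.2.exists_norm_le
  obtain ⟨M, hM⟩ := hg0
  have hrate : 0 < -γ/ε - γf/ε := by rw [← sub_div]; exact div_pos (by linarith) hε
  have hg20 : ∀ s ≤ (0:ℝ), ‖g2 s 0 0‖ ≤ M * Real.exp (-γ/ε * s) := fun s hs =>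
    le_mul_exp_of_exp_neg_mul_le <| by
      rw [neg_div, neg_neg]
      refine le_trans ?_ (hM s hs)
      gcongr
      exact le_add_of_nonneg_left (norm_nonneg _)
  have hg : ∀ s ≤ (0:ℝ), ‖g2 s (xh s) (yh s)‖ ≤ (M + K * (Cx + Cy)) * Real.exp (-γ/ε * s) :=
    fun s hs => norm_le_of_norm_sub_le hK.le (hg2l s) (hg20 s hs) (hx s hs) (hy s hs)
  have hmeas :
      AEStronglyMeasurable (fun s => g2 s (xh s) (yh s)) (volume.restrict (Set.Iic t)) :=
    aestronglyMeasurable_superposition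
      (fun s => continuous_uncurry_of_norm_sub_le hK.le (hg2l s)) hg2m
      ((hmem.1.1.mono (Set.Iic_subset_Iic.2 ht)).aemeasurable measurableSet_Iic)
      ((hmem.2.1.mono (Set.Iic_subset_Iic.2 ht)).aemeasurable measurableSet_Iic)
  have hint := integrableOn_Iic_of_norm_le_exp hrate
    (aestronglyMeasurable_exp_smul_apply F t ε hmeas) fun s hs =>
      norm_exp_smul_apply_le hε hF hs (hg s (hs.trans ht))
  refine ⟨hint, eq_smul_integral_Iic_of_eventually_eq hint
    (a := fun u => NormedSpace.exp (((t - u)/ε) • F) (yh u)) ?_ ?_⟩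
  · exact tendsto_atBot_zero_of_norm_le_exp hrate <| (eventually_le_atBot t).mono
      fun u hu => norm_exp_smul_apply_le hε hF hu (hy u (hu.trans ht))
  · filter_upwards [eventually_le_atBot t] with u hu using hvocy u t hu ht

/-- A `C_β^-` solution of the variation-of-constants identities satisfies
the Lyapunov–Perron integral equation: the improper integral converges and equals `ŷ(t)`. -/
theorem variationOfConstants_implies_lyapunovPerron
    {E₁ E₂ : Type*}
    [NormedAddCommGroup E₁] [NormedSpace ℝ E₁] [FiniteDimensional ℝ E₁] [MeasurableSpace E₁] [BorelSpace E₁]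
    [NormedAddCommGroup E₂] [NormedSpace ℝ E₂] [FiniteDimensional ℝ E₂] [MeasurableSpace E₂] [BorelSpace E₂]
    (S : E₁ →L[ℝ] E₁) (F : E₂ →L[ℝ] E₂)
    (γs γf γ K ε : ℝ)
    (hγs : 0 < γs) (hγf : γf < 0) (hγ : 0 < γ) (hK : 0 < K)
    (hgap : K < -(γ + γf)) (hε : 0 < ε)
    (hS : ∀ t ≤ (0:ℝ), ∀ x : E₁, ‖NormedSpace.exp (t • S) x‖ ≤ Real.exp (γs * t) * ‖x‖)
    (hF : ∀ t ≥ (0:ℝ), ∀ y : E₂, ‖NormedSpace.exp (t • F) y‖ ≤ Real.exp (γf * t) * ‖y‖)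
    (g1 : ℝ → E₁ → E₂ → E₁) (g2 : ℝ → E₁ → E₂ → E₂)
    (hg1m : ∀ x y, Measurable fun t => g1 t x y)
    (hg2m : ∀ x y, Measurable fun t => g2 t x y)
    (hg1b : ∀ x y r, ∃ M, ∀ t : ℝ, |t| ≤ r → ‖g1 t x y‖ ≤ M)
    (hg2b : ∀ x y r, ∃ M, ∀ t : ℝ, |t| ≤ r → ‖g2 t x y‖ ≤ M)
    (hg1l : ∀ t x₁ y₁ x₂ y₂, ‖g1 t x₁ y₁ - g1 t x₂ y₂‖ ≤ K * (‖x₁ - x₂‖ + ‖y₁ - y₂‖))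
    (hg2l : ∀ t x₁ y₁ x₂ y₂, ‖g2 t x₁ y₁ - g2 t x₂ y₂‖ ≤ K * (‖x₁ - x₂‖ + ‖y₁ - y₂‖))
    (hg0 : ∃ M, ∀ t ≤ (0:ℝ),
      Real.exp ((γ/ε) * t) * (‖g1 t 0 0‖ + ‖g2 t 0 0‖) ≤ M)
    (xh : ℝ → E₁) (yh : ℝ → E₂)
    (hmem : MemCneg (-γ/ε) xh ∧ MemCneg (-γ/ε) yh)
    (hvocx : ∀ t ≤ (0:ℝ),
      xh t = NormedSpace.exp (t • S) (xh 0) +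
        ∫ s in (0:ℝ)..t, NormedSpace.exp ((t - s) • S) (g1 s (xh s) (yh s)))
    (hvocy : ∀ u t : ℝ, u ≤ t → t ≤ 0 →
      yh t = NormedSpace.exp (((t - u)/ε) • F) (yh u) +
        (1/ε) • ∫ s in u..t, NormedSpace.exp (((t - s)/ε) • F) (g2 s (xh s) (yh s))) :
    ∀ t ≤ (0:ℝ),
      IntegrableOn (fun s => NormedSpace.exp (((t - s)/ε) • F) (g2 s (xh s) (yh s)))
        (Set.Iic t) ∧
      yh t = LPfast F g2 ε xh yh t :=
  variationOfConstants_implies_lyapunovPerron_general F γf γ K ε hK hgap hε hF g1 g2 hg2m hg2l hg0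
    xh yh hmem hvocy
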